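/- Let a, b, c ∈ ℂ with 0 < Re(a) and 0 < Re(c-a), let z ∈ ℂ ∖ [1,∞), and let α : ℝ → ℂ be continuously differentiable on [0,1]. Define Φ(t) = t^a(1-t)^{c-a}(1-zt)^{-b} for t ∈ (0,1) using principal complex powers. Then ∫_{t=0}^{1} Φ(t)·( α'(t) + (a/t - (c-a)/(1-t) + b·z/(1-zt))·α(t) ) dt = 0. -/

import Mathlib

open Complex MeasureTheory Set Topology

/-!
With `Φ = gaussTwist a b c z`, the integrand is the derivative of `Φ α` on `(0,1)`. Since
`Re a > 0` and `Re (c - a) > 0`, `Φ` extends continuously to `[0,1]` with `Φ 0 = Φ 1 = 0`, and the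
integrand is the beta kernel `t^(a-1) (1-t)^(c-a-1)` times a function continuous on `[0,1]`, hence
integrable. The fundamental theorem of calculus then gives `(Φ α) 1 - (Φ α) 0 = 0`.
-/

noncomputable def gaussTwist (a b c z : ℂ) (t : ℝ) : ℂ :=
  (t : ℂ) ^ a * (1 - (t : ℂ)) ^ (c - a) * (1 - z * t) ^ (-b)

noncomputable def gaussTwistLogDeriv (a b c z : ℂ) (t : ℝ) : ℂ :=
  a / t - (c - a) / (1 - t) + b * z / (1 - z * t)

theorem one_sub_mul_ofReal_mem_slitPlane {z : ℂ} (hz : ∀ r : ℝ, 1 ≤ r → z ≠ (r : ℂ))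
    {t : ℝ} (ht : t ∈ Icc (0 : ℝ) 1) : 1 - z * t ∈ slitPlane := by
  rw [mem_slitPlane_iff]
  by_contra! hcon
  obtain ⟨hre, him⟩ := hcon
  simp only [sub_re, one_re, mul_re, ofReal_re, ofReal_im, mul_zero, sub_zero] at hre
  simp only [sub_im, one_im, mul_im, ofReal_re, ofReal_im, mul_zero, zero_add, zero_sub,
    neg_eq_zero] at him
  have ht0 : 0 < t := ht.1.lt_of_ne (by rintro rfl; norm_num at hre)
  have hzim : z.im = 0 := (mul_eq_zero.mp him).resolve_right ht0.ne'
  exact hz z.re (by nlinarith [ht.2]) (ext (by simp) (by simp [hzim]))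

theorem HasDerivAt.cpow_const_logDeriv {f : ℂ → ℂ} {f' x : ℂ} (c : ℂ) (hf : HasDerivAt f f' x)
    (hx : f x ∈ slitPlane) : HasDerivAt (fun x => f x ^ c) (f x ^ c * (c * f' / f x)) x := by
  convert hf.cpow_const (c := c) hx using 1
  rw [cpow_sub _ _ (slitPlane_ne_zero hx), cpow_one]
  ring

theorem ContinuousOn.cpow_const_of_re_nonneg {X : Type*} [TopologicalSpace X] {f : X → ℂ}
    {s : Set X} {c : ℂ} (hf : ContinuousOn f s) (hre : ∀ x ∈ s, 0 ≤ (f x).re) (hc : 0 < c.re) :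
    ContinuousOn (fun x => f x ^ c) s := fun x hx =>
  (continuousAt_cpow_const_of_re_pos (Or.inl (hre x hx)) hc).comp_continuousWithinAt (hf x hx)

section GaussTwist

variable {a b c z : ℂ}

theorem hasDerivAt_gaussTwist (hz : ∀ r : ℝ, 1 ≤ r → z ≠ (r : ℂ)) {t : ℝ} (ht : t ∈ Ioo (0 : ℝ) 1) :
    HasDerivAt (gaussTwist a b c z) (gaussTwist a b c z t * gaussTwistLogDeriv a b c z t) t := by
  have hslit₁ : (t : ℂ) ∈ slitPlane := ofReal_mem_slitPlane.mpr ht.1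
  have hslit₂ : 1 - (t : ℂ) ∈ slitPlane := by
    exact_mod_cast ofReal_mem_slitPlane.mpr (sub_pos.mpr ht.2)
  have hslit₃ := one_sub_mul_ofReal_mem_slitPlane hz (Ioo_subset_Icc_self ht)
  have h₁ := (hasDerivAt_id (t : ℂ)).cpow_const_logDeriv a hslit₁
  have h₂ := ((hasDerivAt_id (t : ℂ)).const_sub 1).cpow_const_logDeriv (c - a) hslit₂
  have h₃ := (((hasDerivAt_id (t : ℂ)).const_mul z).const_sub 1).cpow_const_logDeriv (-b) hslit₃
  refine ((h₁.mul h₂).mul h₃).comp_ofReal.congr_deriv ?_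
  simp only [gaussTwist, gaussTwistLogDeriv, id, Pi.mul_apply]
  ring

theorem HasDerivAt.gaussTwist_mul (hz : ∀ r : ℝ, 1 ≤ r → z ≠ (r : ℂ)) {α : ℝ → ℂ} {α' : ℂ}
    {t : ℝ} (hα : HasDerivAt α α' t) (ht : t ∈ Ioo (0 : ℝ) 1) :
    HasDerivAt (gaussTwist a b c z * α)
      (gaussTwist a b c z t * (α' + gaussTwistLogDeriv a b c z t * α t)) t :=
  ((hasDerivAt_gaussTwist hz ht).mul hα).congr_deriv (by ring)

theorem continuousOn_gaussTwist (ha : 0 < a.re) (hca : 0 < (c - a).re)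
    (hz : ∀ r : ℝ, 1 ≤ r → z ≠ (r : ℂ)) : ContinuousOn (gaussTwist a b c z) (Icc 0 1) := by
  have h₁ : ContinuousOn (fun t : ℝ => (t : ℂ) ^ a) (Icc 0 1) :=
    continuous_ofReal.continuousOn.cpow_const_of_re_nonneg (fun t ht => by simpa using ht.1) ha
  have h₂ : ContinuousOn (fun t : ℝ => (1 - (t : ℂ)) ^ (c - a)) (Icc 0 1) :=
    (continuous_const.sub continuous_ofReal).continuousOn.cpow_const_of_re_nonneg
      (fun t ht => by simpa using ht.2) hca
  have h₃ : ContinuousOn (fun t : ℝ => (1 - z * t) ^ (-b)) (Icc 0 1) :=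
    (continuous_const.sub (continuous_const.mul continuous_ofReal)).continuousOn.cpow_const
      fun t ht => one_sub_mul_ofReal_mem_slitPlane hz ht
  exact (h₁.mul h₂).mul h₃

theorem gaussTwist_zero (ha : a ≠ 0) : gaussTwist a b c z 0 = 0 := by
  simp [gaussTwist, zero_cpow ha]

theorem gaussTwist_one (hca : c - a ≠ 0) : gaussTwist a b c z 1 = 0 := by
  simp [gaussTwist, zero_cpow hca]

theorem intervalIntegrable_gaussTwist_mul (ha : 0 < a.re) (hca : 0 < (c - a).re)
    (hz : ∀ r : ℝ, 1 ≤ r → z ≠ (r : ℂ)) {α β : ℝ → ℂ} (hα : ContinuousOn α (Icc 0 1))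
    (hβ : ContinuousOn β (Icc 0 1)) :
    IntervalIntegrable (fun t => gaussTwist a b c z t * (β t + gaussTwistLogDeriv a b c z t * α t))
      volume 0 1 := by
  -- `(1 - z t)^(-b) t (1 - t) (β + gaussTwistLogDeriv · α)`, whose poles at `0` and `1` cancel
  have hH : ContinuousOn (fun t : ℝ => (1 - z * t) ^ (-b) * (t * (1 - t) * β t
      + ((1 - (t : ℂ)) * a - t * (c - a) + t * (1 - t) * (b * z / (1 - z * t))) * α t))
      (uIcc 0 1) := by
    rw [uIcc_of_le zero_le_one]
    have hlin : ContinuousOn (fun t : ℝ => 1 - z * t) (Icc 0 1) := by fun_prop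
    have hne : ∀ t ∈ Icc (0 : ℝ) 1, 1 - z * t ≠ 0 := fun t ht =>
      slitPlane_ne_zero (one_sub_mul_ofReal_mem_slitPlane hz ht)
    have hpow := hlin.cpow_const (b := -b) fun t ht => one_sub_mul_ofReal_mem_slitPlane hz ht
    have hquot : ContinuousOn (fun t : ℝ => b * z / (1 - z * t)) (Icc 0 1) :=
      continuousOn_const.div hlin hne
    fun_prop
  have hbeta := (betaIntegral_convergent ha hca).mul_continuousOn hH
  rw [intervalIntegrable_iff_integrableOn_Ioo_of_le zero_le_one] at hbeta ⊢
  refine hbeta.congr_fun (fun t ht => ?_) measurableSet_Ioo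
  have ht₀ : (t : ℂ) ≠ 0 := ofReal_ne_zero.mpr ht.1.ne'
  have ht₁ : 1 - (t : ℂ) ≠ 0 := by exact_mod_cast (sub_pos.mpr ht.2).ne'
  have ht₂ := slitPlane_ne_zero (one_sub_mul_ofReal_mem_slitPlane hz (Ioo_subset_Icc_self ht))
  simp only [gaussTwist, gaussTwistLogDeriv, cpow_sub _ _ ht₀, cpow_sub _ _ ht₁, cpow_one]
  field_simp

end GaussTwist

/-- The integral over the twisted cycle `Δ₀₁ = (0,1)` of the exact form
`d(Φα) = Φ(α' + d log Φ · α)`, with `Φ(t) = t^a(1-t)^{c-a}(1-zt)^{-b}` and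
`d log Φ/dt = a/t - (c-a)/(1-t) + bz/(1-zt)`, vanishes when `Re a > 0`,
`Re (c-a) > 0` and `z ∉ [1,∞)`. -/
theorem stmt16 (a b c : ℂ) (ha : 0 < a.re) (hca : 0 < (c - a).re)
    (z : ℂ) (hz : ∀ r : ℝ, 1 ≤ r → z ≠ (r : ℂ))
    (α : ℝ → ℂ) (hα : ContDiffOn ℝ 1 α (Set.Icc 0 1)) :
    (∫ t in (0 : ℝ)..1,
      ((t : ℂ) ^ a * ((1 : ℂ) - (t : ℂ)) ^ (c - a) * (1 - z * (t : ℂ)) ^ (-b))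
        * (derivWithin α (Set.Icc 0 1) t
          + (a / (t : ℂ) - (c - a) / (1 - (t : ℂ)) + b * z / (1 - z * (t : ℂ))) * α t))
      = 0 := by
  have hα' : ContinuousOn (derivWithin α (Icc 0 1)) (Icc 0 1) :=
    hα.continuousOn_derivWithin (uniqueDiffOn_Icc zero_lt_one) le_rfl
  have hderiv (t : ℝ) (ht : t ∈ Ioo (0 : ℝ) 1) : HasDerivAt α (derivWithin α (Icc 0 1) t) t :=
    (hα.differentiableOn one_ne_zero t (Ioo_subset_Icc_self ht)).hasDerivWithinAt.hasDerivAt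
      (Icc_mem_nhds ht.1 ht.2)
  have hane : a ≠ 0 := fun h => by simp [h] at ha
  have hcane : c - a ≠ 0 := fun h => by simp [h] at hca
  change ∫ t in (0 : ℝ)..1,
    gaussTwist a b c z t * (derivWithin α (Icc 0 1) t + gaussTwistLogDeriv a b c z t * α t) = 0
  rw [intervalIntegral.integral_eq_sub_of_hasDerivAt_of_le zero_le_one
    ((continuousOn_gaussTwist ha hca hz).mul hα.continuousOn)
    (fun t ht => (hderiv t ht).gaussTwist_mul hz ht)
    (intervalIntegrable_gaussTwist_mul ha hca hz hα.continuousOn hα'),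
    Pi.mul_apply, Pi.mul_apply, gaussTwist_one hcane, gaussTwist_zero hane, zero_mul, zero_mul,
    sub_zero]
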